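/- arXiv:math/0508590 — 7 statements merged into one kernel-verified Lean document; each statement's English description precedes it below -/
import Mathlib

section
/- Let p, q be integers with p > 1 and q > 1, and let B(p,q) = (−A²−A⁻²)(S_p A^{−q} + S_q A^{−p}) + S_p S_q + A^{−p−q} ∈ ℤ[A, A⁻¹] (the Kauffman bracket of the double twist knot K(p,q)). Then the coefficient of A^{−(p+q)} in B(p,q) equals −1, and the coefficient of A^n in B(p,q) is 0 for every n < −(p+q). That is, the lowest degree term of ⟨K(p,q)⟩ is −A^{−p−q}. -/
open LaurentPolynomial

/-- `Spos p = Σ_{i=1}^p A^(2-i) (-A³)^(p-i)` in `ℤ[A, A⁻¹]`, for `p : ℕ`. -/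
noncomputable def Spos (p : ℕ) : LaurentPolynomial ℤ :=
  ∑ i ∈ Finset.Icc 1 p, T (2 - (i : ℤ)) * (-(T 3 : LaurentPolynomial ℤ)) ^ (p - i)

/-- `S p` for `p : ℤ`: for `p ≥ 0` it is `Σ_{i=1}^p A^(2-i) (-A³)^(p-i)`
(which is `0` for `p = 0`), and for `p < 0` it is the image of `S (-p)`
under the ring automorphism `A ↦ A⁻¹`. -/
noncomputable def S (p : ℤ) : LaurentPolynomial ℤ :=
  if 0 ≤ p then Spos p.toNat else invert (Spos (-p).toNat)

/-- The Kauffman bracket `⟨K(p,q)⟩` of the double twist knot `K(p,q)`: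
`(-A² - A⁻²)(S_p A^(-q) + S_q A^(-p)) + S_p S_q + A^(-p-q)`. -/
noncomputable def B (p q : ℤ) : LaurentPolynomial ℤ :=
  (-T 2 - T (-2)) * (S p * T (-q) + S q * T (-p)) + S p * S q + T (-p - q)

lemma C_mul_T_apply (a : ℤ) (e n : ℤ) :
    (C a * T e : LaurentPolynomial ℤ).coeff n = if e = n then a else 0 := by
  rw [← single_eq_C_mul_T, AddMonoidAlgebra.coeff_single, Finsupp.single_apply]

lemma term_eq (k : ℕ) (m : ℤ) :
    (T m * (-(T 3 : LaurentPolynomial ℤ)) ^ k)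
      = C ((-1:ℤ)^k) * T (m + k * 3) := by
  rw [neg_pow, T_pow, map_pow, map_neg, map_one, T_add]
  ring

lemma Spos_apply (p : ℕ) (n : ℤ) :
    (Spos p).coeff n = ∑ i ∈ Finset.Icc 1 p,
      (if 2 - (i:ℤ) + ((p - i : ℕ) : ℤ) * 3 = n then ((-1:ℤ)^(p - i)) else 0) := by
  unfold Spos
  rw [AddMonoidAlgebra.coeff_sum, Finsupp.finset_sum_apply]
  exact Finset.sum_congr rfl fun i hi => by rw [term_eq (p - i), C_mul_T_apply]

lemma Spos_low (p : ℕ) {n : ℤ} (hn : n < 2 - (p:ℤ)) : (Spos p).coeff n = 0 := by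
  rw [Spos_apply]
  refine Finset.sum_eq_zero fun i hi => ?_
  simp only [Finset.mem_Icc] at hi
  rw [if_neg]
  have h2 : ((p - i : ℕ) : ℤ) = (p:ℤ) - i := by omega
  omega

lemma Spos_at (p : ℕ) (hp : 1 ≤ p) : (Spos p).coeff (2 - (p:ℤ)) = 1 := by
  rw [Spos_apply]
  rw [Finset.sum_eq_single p]
  · simp
  · intro i hi hne
    simp only [Finset.mem_Icc] at hi
    rw [if_neg]
    have h2 : ((p - i : ℕ) : ℤ) = (p:ℤ) - i := by omega
    have : (i:ℤ) ≠ p := by exact_mod_cast fun h => hne (Nat.cast_injective h)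
    omega
  · intro h
    exact absurd (Finset.mem_Icc.mpr ⟨hp, le_refl p⟩) h

lemma S_low {p : ℤ} (hp : 0 < p) {n : ℤ} (hn : n < 2 - p) : (S p).coeff n = 0 := by
  rw [S, if_pos hp.le]
  exact Spos_low _ (by rwa [Int.toNat_of_nonneg hp.le])

lemma S_at {p : ℤ} (hp : 0 < p) : (S p).coeff (2 - p) = 1 := by
  rw [S, if_pos hp.le]
  have h : ((p.toNat : ℤ)) = p := Int.toNat_of_nonneg hp.le
  rw [show (2 - p) = 2 - (p.toNat : ℤ) by omega]
  exact Spos_at _ (by omega)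

lemma mul_T_apply (f : LaurentPolynomial ℤ) (m n : ℤ) :
    (f * T m : LaurentPolynomial ℤ).coeff n = f.coeff (n - m) := by
  have h := AddMonoidAlgebra.coeff_mul_single_apply f (1:ℤ) m n
  rw [mul_one] at h
  exact h

lemma mul_low {f g : LaurentPolynomial ℤ} {a b : ℤ}
    (hf : ∀ n < a, f.coeff n = 0) (hg : ∀ n < b, g.coeff n = 0) :
    ∀ n < a + b, (f * g : LaurentPolynomial ℤ).coeff n = 0 := by
  intro n hn
  rw [AddMonoidAlgebra.coeff_mul]
  refine Finset.sum_eq_zero fun a₁ ha₁ => Finset.sum_eq_zero fun a₂ ha₂ => ?_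
  dsimp only
  rw [if_neg]
  intro h
  rw [Finsupp.mem_support_iff] at ha₁ ha₂
  have h1 : a ≤ a₁ := not_lt.mp fun hlt => ha₁ (hf _ hlt)
  have h2 : b ≤ a₂ := not_lt.mp fun hlt => ha₂ (hg _ hlt)
  omega


/-- For `p, q > 1`, the lowest degree term of `⟨K(p,q)⟩` is `-A^(-p-q)`. -/
theorem bracket_lowest_term (p q : ℤ) (hp : 1 < p) (hq : 1 < q) :
    (B p q).coeff (-(p + q)) = -1 ∧ ∀ n : ℤ, n < -(p + q) → (B p q).coeff n = 0 := by
  have hp0 : 0 < p := by omega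
  have hq0 : 0 < q := by omega
  have hB : B p q = -(S p * T (2 - q)) - S p * T (-2 - q) - S q * T (2 - p)
      - S q * T (-2 - p) + S p * S q + T (-p - q) := by
    rw [B]
    rw [show (2:ℤ) - q = 2 + -q by ring, show (-2:ℤ) - q = -2 + -q by ring,
      show (2:ℤ) - p = 2 + -p by ring, show (-2:ℤ) - p = -2 + -p by ring]
    simp only [T_add]
    ring
  have hSpSq : ∀ n ≤ -(p + q), (S p * S q : LaurentPolynomial ℤ).coeff n = 0 := fun n hn =>
    mul_low (fun m hm => S_low hp0 hm) (fun m hm => S_low hq0 hm) n (by omega)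
  have key : ∀ n : ℤ, (B p q).coeff n =
      -((S p).coeff (n - (2 - q))) - (S p).coeff (n - (-2 - q)) - (S q).coeff (n - (2 - p))
      - (S q).coeff (n - (-2 - p)) + (S p * S q : LaurentPolynomial ℤ).coeff n
      + (if -p - q = n then 1 else 0) := by
    intro n
    rw [hB]
    simp only [AddMonoidAlgebra.coeff_add, AddMonoidAlgebra.coeff_sub,
      AddMonoidAlgebra.coeff_neg, Finsupp.add_apply, Finsupp.sub_apply, Finsupp.neg_apply,
      mul_T_apply, T_apply]
  constructor
  · rw [key]
    rw [show -(p+q) - (2 - q) = -p - 2 by ring, show -(p+q) - (-2 - q) = 2 - p by ring,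
      show -(p+q) - (2 - p) = -q - 2 by ring, show -(p+q) - (-2 - p) = 2 - q by ring]
    rw [S_low hp0 (by omega), S_at hp0, S_low hq0 (by omega), S_at hq0,
      hSpSq _ le_rfl, if_pos (by ring)]
    ring
  · intro n hn
    rw [key]
    rw [S_low hp0 (by omega), S_low hp0 (by omega), S_low hq0 (by omega),
      S_low hq0 (by omega), hSpSq _ (by omega), if_neg (by omega)]
    ring
end

section
/- For all integers p, q, r, a, b, c, with w = p+q+r+a+b+c, the following identity holds in ℤ[A, A⁻¹]: F(p,q,r,a,b,c) − F(p,q,r,b,a,c) = A^{−w}·(S_p A^p − S_r A^r)·(S_a A^a − S_b A^b)·(1 − (A² + A⁻²)²). (This is the difference of the Kauffman brackets ⟨K(p,q,r;a,b,c)⟩ − ⟨K(p,q,r;b,a,c)⟩ for the transposition swapping a and b.) -/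
open LaurentPolynomial

/-- `S¹(p,q,r) = S_p A^(-q-r) + S_q A^(-p-r) + S_r A^(-p-q)`. -/
noncomputable def S1 (p q r : ℤ) : LaurentPolynomial ℤ :=
  S p * T (-q - r) + S q * T (-p - r) + S r * T (-p - q)

/-- `S²(p,q,r) = S_p S_q A^(-r) + S_p S_r A^(-q) + S_q S_r A^(-p)`. -/
noncomputable def S2 (p q r : ℤ) : LaurentPolynomial ℤ :=
  S p * S q * T (-r) + S p * S r * T (-q) + S q * S r * T (-p)

/-- `S³(p,q,r) = S_p S_q S_r`. -/
noncomputable def S3 (p q r : ℤ) : LaurentPolynomial ℤ :=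
  S p * S q * S r

/-- `S⁰(p,q,r) = A^(-p-q-r)`. -/
noncomputable def S0 (p q r : ℤ) : LaurentPolynomial ℤ :=
  T (-p - q - r)

/-- The Kauffman bracket `⟨K(p,q,r;a,b,c)⟩` of the girth-3 diagram. -/
noncomputable def F (p q r a b c : ℤ) : LaurentPolynomial ℤ :=
  (S0 p q r * S0 a b c + S2 p q r * S2 a b c
      + S p * S a * T (-q - r - b - c) + S p * S c * T (-q - r - a - b)
      + S q * S a * T (-p - r - b - c) + S q * S b * T (-p - r - a - c)
      + S r * S b * T (-p - q - a - c) + S r * S c * T (-p - q - a - b))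
  + (S1 p q r * S0 a b c + S0 p q r * S1 a b c + S2 p q r * S1 a b c
      + S1 p q r * S2 a b c + S3 p q r * S2 a b c + S2 p q r * S3 a b c)
      * (-T (-2) - T 2)
  + (S2 p q r * S0 a b c + S0 p q r * S2 a b c + S3 p q r * S1 a b c
      + S1 p q r * S3 a b c + S3 p q r * S3 a b c
      + S p * S b * T (-q - r - a - c) + S q * S c * T (-p - r - a - b)
      + S r * S a * T (-p - q - b - c))
      * (-T (-2) - T 2) ^ 2
  + (S3 p q r * S0 a b c + S0 p q r * S3 a b c) * (-T (-2) - T 2) ^ 3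

/-- `⟨K(p,q,r;a,b,c)⟩ - ⟨K(p,q,r;b,a,c)⟩
  = A^(-w) (S_p A^p - S_r A^r)(S_a A^a - S_b A^b)(1 - (A² + A⁻²)²)`,
where `w = p+q+r+a+b+c`. -/
theorem bracket_diff_swap_ab (p q r a b c : ℤ) :
    F p q r a b c - F p q r b a c =
      T (-(p + q + r + a + b + c)) * (S p * T p - S r * T r) *
        (S a * T a - S b * T b) * (1 - (T 2 + T (-2)) ^ 2) := by
  simp only [F, S0, S1, S2, S3]
  ring_nf
  simp only [mul_assoc, T_pow, ← T_add]
  ring_nf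
end

section
/- For all integers p, q, r, a, b, c, with w = p+q+r+a+b+c, the following identity holds in ℤ[A, A⁻¹]: F(p,q,r,a,b,c) − F(p,q,r,a,c,b) = A^{−w}·(S_p A^p − S_q A^q)·(S_c A^c − S_b A^b)·(1 − (A² + A⁻²)²). (This is the difference of the Kauffman brackets ⟨K(p,q,r;a,b,c)⟩ − ⟨K(p,q,r;a,c,b)⟩ for the transposition swapping b and c.) -/
open LaurentPolynomial

section Aux
open LaurentPolynomial

private lemma Tsplit2 (x u z : ℤ) (h : x = u + z) :
    (T x : LaurentPolynomial ℤ) = T u * T z := by rw [h, T_add]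

private lemma Tsplit3 (x u v z : ℤ) (h : x = u + v + z) :
    (T x : LaurentPolynomial ℤ) = T u * T v * T z := by rw [h, T_add, T_add]

private lemma Tsplit4 (x u v y z : ℤ) (h : x = u + v + y + z) :
    (T x : LaurentPolynomial ℤ) = T u * T v * T y * T z := by
  rw [h, T_add, T_add, T_add]

private noncomputable def gS (n : ℤ) : LaurentPolynomial ℤ := S n * T n

private noncomputable def E1 (p q r : ℤ) : LaurentPolynomial ℤ := gS p + gS q + gS r
private noncomputable def E2 (p q r : ℤ) : LaurentPolynomial ℤ :=
  gS p * gS q + gS p * gS r + gS q * gS r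
private noncomputable def E3 (p q r : ℤ) : LaurentPolynomial ℤ := gS p * gS q * gS r

private lemma S1_eq (p q r : ℤ) : S1 p q r = E1 p q r * T (-p - q - r) := by
  rw [S1, Tsplit2 (-q - r) p (-p - q - r) (by ring),
    Tsplit2 (-p - r) q (-p - q - r) (by ring),
    Tsplit2 (-p - q) r (-p - q - r) (by ring)]
  simp only [E1, gS]; ring

private lemma S2_eq (p q r : ℤ) : S2 p q r = E2 p q r * T (-p - q - r) := by
  rw [S2, Tsplit3 (-r) p q (-p - q - r) (by ring),
    Tsplit3 (-q) p r (-p - q - r) (by ring),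
    Tsplit3 (-p) q r (-p - q - r) (by ring)]
  simp only [E2, gS]; ring

private lemma S3_eq (p q r : ℤ) : S3 p q r = E3 p q r * T (-p - q - r) := by
  have h : (T p * T q * T r * T (-p - q - r) : LaurentPolynomial ℤ) = 1 := by
    rw [← T_add, ← T_add, ← T_add, show p + q + r + (-p - q - r) = 0 by ring, T_zero]
  rw [S3]; simp only [E3, gS]
  linear_combination (-(S p * S q * S r)) * h

private lemma F_eq (p q r a b c : ℤ) :
    F p q r a b c = T (-p - q - r) * T (-a - b - c) *
      ((1 + E2 p q r * E2 a b c + gS p * gS a + gS p * gS c + gS q * gS a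
          + gS q * gS b + gS r * gS b + gS r * gS c)
        + (E1 p q r + E1 a b c + E2 p q r * E1 a b c + E1 p q r * E2 a b c
            + E3 p q r * E2 a b c + E2 p q r * E3 a b c) * (-T (-2) - T 2)
        + (E2 p q r + E2 a b c + E3 p q r * E1 a b c + E1 p q r * E3 a b c
            + E3 p q r * E3 a b c + gS p * gS b + gS q * gS c + gS r * gS a)
            * (-T (-2) - T 2) ^ 2
        + (E3 p q r + E3 a b c) * (-T (-2) - T 2) ^ 3) := by
  simp only [F, S0]
  rw [S1_eq p q r, S1_eq a b c, S2_eq p q r, S2_eq a b c, S3_eq p q r, S3_eq a b c,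
    Tsplit4 (-q - r - b - c) p a (-p - q - r) (-a - b - c) (by ring),
    Tsplit4 (-q - r - a - b) p c (-p - q - r) (-a - b - c) (by ring),
    Tsplit4 (-p - r - b - c) q a (-p - q - r) (-a - b - c) (by ring),
    Tsplit4 (-p - r - a - c) q b (-p - q - r) (-a - b - c) (by ring),
    Tsplit4 (-p - q - a - c) r b (-p - q - r) (-a - b - c) (by ring),
    Tsplit4 (-p - q - a - b) r c (-p - q - r) (-a - b - c) (by ring),
    Tsplit4 (-q - r - a - c) p b (-p - q - r) (-a - b - c) (by ring),
    Tsplit4 (-p - r - a - b) q c (-p - q - r) (-a - b - c) (by ring),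
    Tsplit4 (-p - q - b - c) r a (-p - q - r) (-a - b - c) (by ring)]
  simp only [E1, E2, E3, gS]
  ring

end Aux

/-- `⟨K(p,q,r;a,b,c)⟩ - ⟨K(p,q,r;a,c,b)⟩
  = A^(-w) (S_p A^p - S_q A^q)(S_c A^c - S_b A^b)(1 - (A² + A⁻²)²)`,
where `w = p+q+r+a+b+c`. -/

theorem bracket_diff_swap_bc (p q r a b c : ℤ) :
    F p q r a b c - F p q r a c b =
      T (-(p + q + r + a + b + c)) * (S p * T p - S q * T q) *
        (S c * T c - S b * T b) * (1 - (T 2 + T (-2)) ^ 2) := by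
  rw [F_eq p q r a b c, F_eq p q r a c b,
    show (-a - c - b : ℤ) = -a - b - c by ring,
    show (-(p + q + r + a + b + c) : ℤ) = (-p - q - r) + (-a - b - c) by ring, T_add]
  simp only [E1, E2, E3, gS]
  ring
end

section
/- For all integers p, q, r, a, b, c, with w = p+q+r+a+b+c, the following identity holds in ℤ[A, A⁻¹]: F(p,q,r,a,b,c) − F(p,q,r,c,b,a) = A^{−w}·(S_q A^q − S_r A^r)·(S_a A^a − S_c A^c)·(1 − (A² + A⁻²)²). (This is the difference of the Kauffman brackets ⟨K(p,q,r;a,b,c)⟩ − ⟨K(p,q,r;c,b,a)⟩ for the transposition swapping a and c.) -/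
open LaurentPolynomial

lemma T_sub_split (m n : ℤ) : (T (m - n) : LaurentPolynomial ℤ) = T m * T (-n) := by
  rw [sub_eq_add_neg, T_add]

lemma T_mul_T_neg (n : ℤ) : (T n * T (-n) : LaurentPolynomial ℤ) = 1 := by
  rw [← T_add, add_neg_cancel, T_zero]

/-- `⟨K(p,q,r;a,b,c)⟩ - ⟨K(p,q,r;c,b,a)⟩
  = A^(-w) (S_q A^q - S_r A^r)(S_a A^a - S_c A^c)(1 - (A² + A⁻²)²)`,
where `w = p+q+r+a+b+c`. -/
theorem bracket_diff_swap_ac (p q r a b c : ℤ) :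
    F p q r a b c - F p q r c b a =
      T (-(p + q + r + a + b + c)) * (S q * T q - S r * T r) *
        (S a * T a - S c * T c) * (1 - (T 2 + T (-2)) ^ 2) := by
  have hq := T_mul_T_neg q
  have hr := T_mul_T_neg r
  have ha := T_mul_T_neg a
  have hc := T_mul_T_neg c
  simp only [F, S1, S2, S3, S0, neg_add, T_sub_split, T_add]
  linear_combination
    (S q * (S c * T c - S a * T a) * (T (-p) * T (-r) * T (-a) * T (-b) * T (-c)) *
      (1 - (T 2 + T (-2)) ^ 2)) * hq +
    (S r * (S a * T a - S c * T c) * (T (-p) * T (-q) * T (-a) * T (-b) * T (-c)) *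
      (1 - (T 2 + T (-2)) ^ 2)) * hr +
    (S a * (S r * T (-q) - S q * T (-r)) * (T (-p) * T (-b) * T (-c)) *
      (1 - (T 2 + T (-2)) ^ 2)) * ha +
    (S c * (S q * T (-r) - S r * T (-q)) * (T (-p) * T (-a) * T (-b)) *
      (1 - (T 2 + T (-2)) ^ 2)) * hc
end

section
/- For all integers p, q, r, a, b, c, with w = p+q+r+a+b+c, the following identity holds in ℤ[A, A⁻¹]: F(p,q,r,a,b,c) − F(p,q,r,c,a,b) = A^{−w} · det [[S_pA^p, S_qA^q, S_rA^r], [S_cA^c, S_aA^a, S_bA^b], [1, 1, 1]] · (1 − (A² + A⁻²)²), where the determinant is of the displayed 3×3 matrix over ℤ[A, A⁻¹]. (This is the difference of the Kauffman brackets ⟨K(p,q,r;a,b,c)⟩ − ⟨K(p,q,r;c,a,b)⟩ for a 3-cycle permuting a, b, c.) -/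
open LaurentPolynomial

set_option maxHeartbeats 4000000 in
/-- `⟨K(p,q,r;a,b,c)⟩ - ⟨K(p,q,r;c,a,b)⟩
  = A^(-w) det [[S_p A^p, S_q A^q, S_r A^r], [S_c A^c, S_a A^a, S_b A^b], [1,1,1]]
      (1 - (A² + A⁻²)²)`, where `w = p+q+r+a+b+c`. -/
theorem bracket_diff_cycle_cab (p q r a b c : ℤ) :
    F p q r a b c - F p q r c a b =
      T (-(p + q + r + a + b + c)) *
        (Matrix.det !![S p * T p, S q * T q, S r * T r;
                       S c * T c, S a * T a, S b * T b;
                       1, 1, 1]) * (1 - (T 2 + T (-2)) ^ 2) := by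
  have hp : (T p * T (-p) : LaurentPolynomial ℤ) = 1 := by rw [← T_add]; simp
  have hq : (T q * T (-q) : LaurentPolynomial ℤ) = 1 := by rw [← T_add]; simp
  have hr : (T r * T (-r) : LaurentPolynomial ℤ) = 1 := by rw [← T_add]; simp
  have ha : (T a * T (-a) : LaurentPolynomial ℤ) = 1 := by rw [← T_add]; simp
  have hb : (T b * T (-b) : LaurentPolynomial ℤ) = 1 := by rw [← T_add]; simp
  have hc : (T c * T (-c) : LaurentPolynomial ℤ) = 1 := by rw [← T_add]; simp
  simp only [F, S0, S1, S2, S3, Matrix.det_fin_three, Matrix.cons_val', Matrix.cons_val_zero,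
    Matrix.cons_val_one, Matrix.head_cons, Matrix.empty_val', Matrix.cons_val_fin_one,
    Matrix.head_fin_const, Matrix.cons_val_two, Matrix.tail_cons, Matrix.of_apply,
    Matrix.tail_val']
  simp only [sub_eq_add_neg, neg_add, T_add]
  linear_combination ((S p)*(S b)*(T b)*(T (-q))*(T (-r))*(T (-a))*(T (-b))*(T (-c)) + (-1)*(S p)*(S b)*(T b)*(T (-q))*(T (-r))*(T (-a))*(T (-b))*(T (-c))*(T (-2))^2 + (-2)*(S p)*(S b)*(T b)*(T (-q))*(T (-r))*(T (-a))*(T (-b))*(T (-c))*(T 2)*(T (-2)) + (-1)*(S p)*(S b)*(T b)*(T (-q))*(T (-r))*(T (-a))*(T (-b))*(T (-c))*(T 2)^2 + (-1)*(S p)*(S a)*(T a)*(T (-q))*(T (-r))*(T (-a))*(T (-b))*(T (-c)) + (S p)*(S a)*(T a)*(T (-q))*(T (-r))*(T (-a))*(T (-b))*(T (-c))*(T (-2))^2 + 2*(S p)*(S a)*(T a)*(T (-q))*(T (-r))*(T (-a))*(T (-b))*(T (-c))*(T 2)*(T (-2)) + (S p)*(S a)*(T a)*(T (-q))*(T (-r))*(T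 (-a))*(T (-b))*(T (-c))*(T 2)^2) * hp + ((S q)*(S c)*(T c)*(T (-p))*(T (-r))*(T (-a))*(T (-b))*(T (-c)) + (-1)*(S q)*(S c)*(T c)*(T (-p))*(T (-r))*(T (-a))*(T (-b))*(T (-c))*(T (-2))^2 + (-2)*(S q)*(S c)*(T c)*(T (-p))*(T (-r))*(T (-a))*(T (-b))*(T (-c))*(T 2)*(T (-2)) + (-1)*(S q)*(S c)*(T c)*(T (-p))*(T (-r))*(T (-a))*(T (-b))*(T (-c))*(T 2)^2 + (-1)*(S q)*(S b)*(T b)*(T (-p))*(T (-r))*(T (-a))*(T (-b))*(T (-c)) + (S q)*(S b)*(T b)*(T (-p))*(T (-r))*(T (-a))*(T (-b))*(T (-c))*(T (-2))^2 + 2*(S q)*(S b)*(T b)*(T (-p))*(T (-r))*(T (-a))*(T (-b))*(T (-c))*(T 2)*(T (-2)) + (S q)*(S b)*(T b)*(T (-p))*(T (-r))*(T (-a))*(T (-b))*(T (-c))*(T 2)^2) * hq + ((-1)*(S r)*(S c)*(T c)*(T (-p))*(T (-q))*(T (-a))*(T (-b))*(T (-c)) + (S r)*(S c)*(T c)*(T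 (-p))*(T (-q))*(T (-a))*(T (-b))*(T (-c))*(T (-2))^2 + 2*(S r)*(S c)*(T c)*(T (-p))*(T (-q))*(T (-a))*(T (-b))*(T (-c))*(T 2)*(T (-2)) + (S r)*(S c)*(T c)*(T (-p))*(T (-q))*(T (-a))*(T (-b))*(T (-c))*(T 2)^2 + (S r)*(S a)*(T a)*(T (-p))*(T (-q))*(T (-a))*(T (-b))*(T (-c)) + (-1)*(S r)*(S a)*(T a)*(T (-p))*(T (-q))*(T (-a))*(T (-b))*(T (-c))*(T (-2))^2 + (-2)*(S r)*(S a)*(T a)*(T (-p))*(T (-q))*(T (-a))*(T (-b))*(T (-c))*(T 2)*(T (-2)) + (-1)*(S r)*(S a)*(T a)*(T (-p))*(T (-q))*(T (-a))*(T (-b))*(T (-c))*(T 2)^2) * hr + ((S r)*(S a)*(T (-p))*(T (-q))*(T (-b))*(T (-c)) + (-1)*(S r)*(S a)*(T (-p))*(T (-q))*(T (-b))*(T (-c))*(T (-2))^2 + (-2)*(S r)*(S a)*(T (-p))*(T (-q))*(T (-b))*(T (-c))*(T 2)*(T (-2)) + (-1)*(S r)*(S a)*(T (-p))*(T (-q))*(T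 (-b))*(T (-c))*(T 2)^2 + (-1)*(S p)*(S a)*(T (-q))*(T (-r))*(T (-b))*(T (-c)) + (S p)*(S a)*(T (-q))*(T (-r))*(T (-b))*(T (-c))*(T (-2))^2 + 2*(S p)*(S a)*(T (-q))*(T (-r))*(T (-b))*(T (-c))*(T 2)*(T (-2)) + (S p)*(S a)*(T (-q))*(T (-r))*(T (-b))*(T (-c))*(T 2)^2) * ha + ((-1)*(S q)*(S b)*(T (-p))*(T (-r))*(T (-a))*(T (-c)) + (S q)*(S b)*(T (-p))*(T (-r))*(T (-a))*(T (-c))*(T (-2))^2 + 2*(S q)*(S b)*(T (-p))*(T (-r))*(T (-a))*(T (-c))*(T 2)*(T (-2)) + (S q)*(S b)*(T (-p))*(T (-r))*(T (-a))*(T (-c))*(T 2)^2 + (S p)*(S b)*(T (-q))*(T (-r))*(T (-a))*(T (-c)) + (-1)*(S p)*(S b)*(T (-q))*(T (-r))*(T (-a))*(T (-c))*(T (-2))^2 + (-2)*(S p)*(S b)*(T (-q))*(T (-r))*(T (-a))*(T (-c))*(T 2)*(T (-2)) + (-1)*(S p)*(S b)*(T (-q))*(T (-r))*(T (-a))*(T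 (-c))*(T 2)^2) * hb + ((-1)*(S r)*(S c)*(T (-p))*(T (-q))*(T (-a))*(T (-b)) + (S r)*(S c)*(T (-p))*(T (-q))*(T (-a))*(T (-b))*(T (-2))^2 + 2*(S r)*(S c)*(T (-p))*(T (-q))*(T (-a))*(T (-b))*(T 2)*(T (-2)) + (S r)*(S c)*(T (-p))*(T (-q))*(T (-a))*(T (-b))*(T 2)^2 + (S q)*(S c)*(T (-p))*(T (-r))*(T (-a))*(T (-b)) + (-1)*(S q)*(S c)*(T (-p))*(T (-r))*(T (-a))*(T (-b))*(T (-2))^2 + (-2)*(S q)*(S c)*(T (-p))*(T (-r))*(T (-a))*(T (-b))*(T 2)*(T (-2)) + (-1)*(S q)*(S c)*(T (-p))*(T (-r))*(T (-a))*(T (-b))*(T 2)^2) * hc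
end

section
/- Let q, r, b, c be even integers, and suppose the following identity holds in ℤ[A, A⁻¹]: (1 − A^{4q})(1 − A^{4b})(1 − A^{4c}) + (1 − A^{4r})(1 − A^{4b})(1 − A^{4c}) − (1 − A^{4q})(1 − A^{4r})(1 − A^{4b}) − (1 − A^{4q})(1 − A^{4r})(1 − A^{4c}) = (A² + A⁻²)² · [ (1 − A^{4b})(1 − A^{4c}) − (1 − A^{4q})(1 − A^{4r}) + A^{4c} − A^{4q} ]. Then q = c, and moreover either q = 0 or b = r. (This is the algebraic core of the theorem that if all of p,q,r,a,b,c are even with p ≠ a and the girth-3 diagrams K(p,q,r;a,b,c) and K(a,q,r;p,b,c) have equal Kauffman brackets, then either q = c = 0, or q = c and b = r.) -/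
open LaurentPolynomial

/-!
Since `q, r, b, c` are even, the substitution `A ↦ ζA` with `ζ⁴ = -1` fixes `A^{4q}, …, A^{4c}`,
while it turns `(A² + A⁻²)² = A⁴ + 2 + A⁻⁴` into `-A⁴ + 2 - A⁻⁴`. Subtracting the substituted
identity from the original one leaves `2 (A⁴ + A⁻⁴) E = 0` for the bracket
`E = A^{4b+4c} - A^{4b} + A^{4r} - A^{4r+4q}`, hence `E = 0`, and comparing the exponents of the
two positive and the two negative monomials of `E` gives the claim.
-/

namespace LaurentPolynomial

section Rescale

variable {R S : Type*} [CommSemiring R] [CommSemiring S] [Algebra R S]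

noncomputable def rescale (ζ : Sˣ) : R[T;T⁻¹] →ₐ[R] S[T;T⁻¹] :=
  AddMonoidAlgebra.lift R S[T;T⁻¹] ℤ
    { toFun n := C (↑(ζ ^ n.toAdd) : S) * T n.toAdd
      map_one' := by simp [T_zero]
      map_mul' m n := by
        simp only [toAdd_mul, zpow_add, Units.val_mul, map_mul, T_add]
        ring }

@[simp]
lemma rescale_T (ζ : Sˣ) (n : ℤ) : rescale (R := R) ζ (T n) = C (↑(ζ ^ n) : S) * T n :=
  AddMonoidAlgebra.lift_single _ _ _ |>.trans (by simp)

lemma rescale_T_of_pow_eq_one {ζ : Sˣ} {m n : ℤ} (hζ : ζ ^ m = 1) (hmn : m ∣ n) :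
    rescale (R := R) ζ (T n) = T n := by
  obtain ⟨k, rfl⟩ := hmn
  simp [zpow_mul, hζ]

end Rescale

section Semiring

variable {R : Type*} [Semiring R]

lemma T_two_add_T_neg_two_sq : (T 2 + T (-2) : R[T;T⁻¹]) ^ 2 = T 4 + 2 + T (-4) := by
  rw [sq, add_mul, mul_add, mul_add, ← T_add, ← T_add, ← T_add, ← T_add]
  norm_num [T_zero]
  rw [add_assoc, add_assoc, ← add_assoc 1, one_add_one_eq_two]

lemma T_add_T_ne_zero [Nontrivial R] {m n : ℤ} (hmn : m ≠ n) : (T m + T n : R[T;T⁻¹]) ≠ 0 := by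
  intro h
  have h_coeff := congrArg (fun f : R[T;T⁻¹] => f.coeff m) h
  simp [T, -single_eq_C_mul_T, AddMonoidAlgebra.coeff_add, AddMonoidAlgebra.coeff_single,
    hmn.symm] at h_coeff

lemma T_add_T_eq_T_add_T_iff (h2 : (2 : R) ≠ 0) {k l m n : ℤ} :
    (T k + T l : R[T;T⁻¹]) = T m + T n ↔ k = m ∧ l = n ∨ k = n ∧ l = m := by
  have h1 : (1 : R) ≠ 0 := fun h => h2 (by rw [← one_add_one_eq_two, h, add_zero])
  rw [T, T, T, T, AddMonoidAlgebra.single_add_single_inj h1 h1, one_add_one_eq_two]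
  simp [h2]

end Semiring

end LaurentPolynomial

lemma IsAlgClosed.exists_unit_pow_eq_neg_one {K : Type*} [Field K] [IsAlgClosed K] {n : ℕ}
    (hn : n ≠ 0) : ∃ ζ : Kˣ, ζ ^ n = -1 := by
  obtain ⟨z, hz⟩ := IsAlgClosed.exists_pow_nat_eq (-1 : K) (Nat.pos_of_ne_zero hn)
  exact ⟨Units.mk0 z (by rintro rfl; simp [zero_pow hn] at hz), Units.ext (by simpa using hz)⟩

/-- If `q, r, b, c` are even and the identity
`(1-A^{4q})(1-A^{4b})(1-A^{4c}) + (1-A^{4r})(1-A^{4b})(1-A^{4c})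
 - (1-A^{4q})(1-A^{4r})(1-A^{4b}) - (1-A^{4q})(1-A^{4r})(1-A^{4c})
 = (A²+A⁻²)² ((1-A^{4b})(1-A^{4c}) - (1-A^{4q})(1-A^{4r}) + A^{4c} - A^{4q})`
holds in `ℤ[A,A⁻¹]`, then `q = c`, and moreover `q = 0` or `b = r`. -/
theorem even_bracket_identity_core (q r b c : ℤ)
    (hq : Even q) (hr : Even r) (hb : Even b) (hc : Even c)
    (hid : ((1 : LaurentPolynomial ℤ) - T (4 * q)) * (1 - T (4 * b)) * (1 - T (4 * c))
        + (1 - T (4 * r)) * (1 - T (4 * b)) * (1 - T (4 * c))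
        - (1 - T (4 * q)) * (1 - T (4 * r)) * (1 - T (4 * b))
        - (1 - T (4 * q)) * (1 - T (4 * r)) * (1 - T (4 * c))
        = ((T 2 + T (-2) : LaurentPolynomial ℤ)) ^ 2 *
          ((1 - T (4 * b)) * (1 - T (4 * c)) - (1 - T (4 * q)) * (1 - T (4 * r))
            + T (4 * c) - T (4 * q))) :
    q = c ∧ (q = 0 ∨ b = r) := by
  obtain ⟨ζ, hζ⟩ := IsAlgClosed.exists_unit_pow_eq_neg_one (K := ℂ) (n := 4) (by norm_num)
  have hζ8 : ζ ^ (8 : ℤ) = 1 := by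
    rw [show (8 : ℤ) = (4 : ℕ) * 2 from rfl, zpow_mul, zpow_natCast, hζ]
    simp
  have hfix {n : ℤ} (hn : Even n) : rescale (R := ℤ) ζ (T (4 * n)) = T (4 * n) :=
    rescale_T_of_pow_eq_one hζ8 (by obtain ⟨k, rfl⟩ := hn; exact ⟨k, by ring⟩)
  have hζ' : ζ ^ (-4 : ℤ) = -1 := by rw [zpow_neg, zpow_ofNat, hζ, inv_neg, inv_one]
  rw [T_two_add_T_neg_two_sq] at hid
  have h1 := congrArg (rescale (1 : ℂˣ)) hid
  have h2 := congrArg (rescale ζ) hid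
  simp only [map_add, map_sub, map_mul, map_one, map_ofNat, rescale_T, one_zpow, Units.val_one,
    one_mul] at h1
  simp only [map_add, map_sub, map_mul, map_one, map_ofNat, hfix hq, hfix hr, hfix hb, hfix hc,
    rescale_T, zpow_ofNat, hζ, hζ', Units.val_neg, Units.val_one, map_neg, neg_one_mul] at h2
  have hprod : (2 * (T 4 + T (-4)) : ℂ[T;T⁻¹]) *
      ((T (4 * b + 4 * c) + T (4 * r)) - (T (4 * b) + T (4 * r + 4 * q))) = 0 := by
    rw [T_add, T_add]
    linear_combination h2 - h1
  have hE := (mul_eq_zero.1 hprod).resolve_left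
    (mul_ne_zero (by rw [← map_ofNat C]; simp) (T_add_T_ne_zero (by norm_num)))
  rcases (T_add_T_eq_T_add_T_iff (by norm_num)).1 (sub_eq_zero.1 hE) with h | h <;> omega
end

section
/- Let q, b, r be even integers and suppose the identity (1 − A^{4q})² · (A^{4r} − A^{4b}) = (A² + A⁻²)² · (1 − A^{4q}) · (A^{4r} − A^{4b}) holds in ℤ[A, A⁻¹]. Then q = 0 or b = r. -/
/-!
Cancelling the nonzero factors `A^{4r} - A^{4b}` and `1 - A^{4q}` would leave
`1 - A^{4q} = (A² + A⁻²)²`, which is impossible: at `A = 1` the two sides are `0` and `4`.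
-/

open LaurentPolynomial

namespace LaurentPolynomial

variable {R : Type*}

theorem T_sub_T_ne_zero [Ring R] [Nontrivial R] {m n : ℤ} (h : m ≠ n) :
    (T m - T n : R[T;T⁻¹]) ≠ 0 := by
  intro hmn
  have hcoeff := congrArg (·.coeff m) (sub_eq_zero.mp hmn)
  simp only [T_apply, if_neg h.symm] at hcoeff
  exact one_ne_zero hcoeff

theorem one_sub_T_ne_zero [Ring R] [Nontrivial R] {n : ℤ} (h : n ≠ 0) :
    (1 - T n : R[T;T⁻¹]) ≠ 0 := by
  simpa only [T_zero] using T_sub_T_ne_zero (R := R) h.symm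

theorem one_sub_T_ne_sq_T_add_T_neg [CommRing R] [CharZero R] (m n : ℤ) :
    (1 - T m : R[T;T⁻¹]) ≠ (T n + T (-n)) ^ 2 := by
  intro h
  have hone := congrArg (eval₂ (RingHom.id R) 1) h
  simp only [map_sub, map_add, map_pow, map_one, eval₂_T, one_zpow, Units.val_one] at hone
  norm_num at hone

end LaurentPolynomial

theorem even_bracket_identity_core'_general (q b r : ℤ)
    (hid : ((1 : LaurentPolynomial ℤ) - T (4 * q)) ^ 2 * (T (4 * r) - T (4 * b))
        = ((T 2 + T (-2) : LaurentPolynomial ℤ)) ^ 2 * (1 - T (4 * q)) * (T (4 * r) - T (4 * b))) :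
    q = 0 ∨ b = r := by
  by_contra! ⟨hq, hbr⟩
  have hdiff : (T (4 * r) - T (4 * b) : LaurentPolynomial ℤ) ≠ 0 :=
    T_sub_T_ne_zero (by omega)
  have hfactor : (1 - T (4 * q) : LaurentPolynomial ℤ) ≠ 0 :=
    one_sub_T_ne_zero (by omega)
  have hsq := mul_right_cancel₀ hdiff hid
  rw [sq (1 - T (4 * q))] at hsq
  exact one_sub_T_ne_sq_T_add_T_neg (4 * q) 2 (mul_right_cancel₀ hfactor hsq)

/-- If `q, b, r` are even and
`(1-A^{4q})² (A^{4r} - A^{4b}) = (A²+A⁻²)² (1-A^{4q}) (A^{4r} - A^{4b})`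
holds in `ℤ[A,A⁻¹]`, then `q = 0` or `b = r`. -/
theorem even_bracket_identity_core' (q b r : ℤ)
    (hq : Even q) (hb : Even b) (hr : Even r)
    (hid : ((1 : LaurentPolynomial ℤ) - T (4 * q)) ^ 2 * (T (4 * r) - T (4 * b))
        = ((T 2 + T (-2) : LaurentPolynomial ℤ)) ^ 2 * (1 - T (4 * q)) * (T (4 * r) - T (4 * b))) :
    q = 0 ∨ b = r :=
  even_bracket_identity_core'_general q b r hid
end
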